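/- For every λ ∈ ℝ, the kernel is recovered from the resolvent kernel by K(t,s) = -λ ∫_s^t Γ(λ;t,η) K(η,s) dη + Γ(λ;t,s) for all (t,s) ∈ Ω; that is, the resolvent kernel of Γ is the kernel K itself. -/

import Mathlib

/-!
Extend `K` continuously to the whole plane (Tietze); the iterated kernels and the resolvent on
`Ω` only see the values of `K` on `Ω`. For a continuous kernel, Fubini over the triangle
`s ≤ ξ ≤ η ≤ t` shows `K_{n+1}(t,s) = ∫_s^t K_n(t,η) K(η,s) dη`, i.e. the kernels may also be
iterated from the right. The bound `|K_n(t,s)| ≤ M^{n+1} (t-s)^n / n!` dominates the resolvent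
series, so it can be integrated term by term:
`λ ∫_s^t Γ(λ;t,η) K(η,s) dη = Σ_ℓ λ^{ℓ+1} K_{ℓ+1}(t,s) = Γ(λ;t,s) - K(t,s)`.
-/

open MeasureTheory intervalIntegral Set

/-- The iterated kernels: `K₀ = K` and `Kₙ(t,s) = ∫_s^t K(t,η) K_{n-1}(η,s) dη` for `n ≥ 1`. -/
noncomputable def iterK (K : ℝ → ℝ → ℝ) : ℕ → ℝ → ℝ → ℝ
  | 0 => K
  | n + 1 => fun t s => ∫ η in s..t, K t η * iterK K n η s

/-- The resolvent kernel `Γ(λ;t,s) = Σ_{ℓ=0}^∞ K_ℓ(t,s) λ^ℓ`. -/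
noncomputable def resolventKer (K : ℝ → ℝ → ℝ) (lam t s : ℝ) : ℝ :=
  ∑' ℓ : ℕ, iterK K ℓ t s * lam ^ ℓ

open Function Nat

theorem ContinuousOn.exists_continuous_eqOn {X : Type*} [TopologicalSpace X] [NormalSpace X]
    {f : X → ℝ} {S : Set X} (hf : ContinuousOn f S) (hS : IsClosed S) :
    ∃ g : X → ℝ, Continuous g ∧ EqOn f g S := by
  obtain ⟨g, hg⟩ :=
    ContinuousMap.exists_restrict_eq hS ⟨_, continuousOn_iff_continuous_domRestrict.1 hf⟩
  exact ⟨g, g.continuous, fun x hx => (DFunLike.congr_fun hg ⟨x, hx⟩).symm⟩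

theorem integral_integral_triangle_swap {E : Type*} [NormedAddCommGroup E] [NormedSpace ℝ E]
    {f : ℝ → ℝ → E} (hf : Continuous (uncurry f)) {s t : ℝ} (hst : s ≤ t) :
    ∫ η in s..t, ∫ ξ in s..η, f η ξ = ∫ ξ in s..t, ∫ η in ξ..t, f η ξ := by
  set μ := volume.restrict (Ioc s t)
  set F : ℝ → ℝ → E := fun η ξ => if ξ ≤ η then f η ξ else 0
  have hF : Integrable (uncurry F) (μ.prod μ) := by
    have hF_eq : uncurry F = {p : ℝ × ℝ | p.2 ≤ p.1}.indicator (uncurry f) := by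
      ext ⟨η, ξ⟩; simp [F, indicator_apply]
    have hf_int : IntegrableOn (uncurry f) (Ioc s t ×ˢ Ioc s t) :=
      (hf.continuousOn.integrableOn_compact (isCompact_Icc.prod isCompact_Icc)).mono_set
        (prod_mono Ioc_subset_Icc_self Ioc_subset_Icc_self)
    rw [Measure.prod_restrict, ← Measure.volume_eq_prod, hF_eq]
    exact hf_int.integrable.indicator (measurableSet_le measurable_snd measurable_fst)
  have inner_left : ∀ η ∈ Ioc s t, ∫ ξ in s..η, f η ξ = ∫ ξ, F η ξ ∂μ := by
    intro η hη
    have : F η = (Iic η).indicator (f η) := by ext ξ; simp [F, indicator_apply]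
    rw [this, setIntegral_indicator measurableSet_Iic, Ioc_inter_Iic, min_eq_right hη.2,
      integral_of_le hη.1.le]
  have inner_right : ∀ ξ ∈ Ioc s t, ∫ η in ξ..t, f η ξ = ∫ η, F η ξ ∂μ := by
    intro ξ hξ
    have hF_eq : (F · ξ) = (Ici ξ).indicator (f · ξ) := by ext η; simp [F, indicator_apply]
    have hdom : Ioc s t ∩ Ici ξ = Icc ξ t := by
      ext η
      simp only [mem_inter_iff, mem_Ioc, mem_Ici, mem_Icc]
      exact ⟨fun h => ⟨h.2, h.1.2⟩, fun h => ⟨⟨hξ.1.trans_le h.1, h.2⟩, h.1⟩⟩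
    rw [hF_eq, setIntegral_indicator measurableSet_Ici, hdom, integral_Icc_eq_integral_Ioc,
      integral_of_le hξ.2]
  rw [integral_of_le hst, integral_of_le hst, setIntegral_congr_fun measurableSet_Ioc inner_left,
    setIntegral_congr_fun measurableSet_Ioc inner_right]
  exact integral_integral_swap hF

section IterK

variable {K : ℝ → ℝ → ℝ}

theorem continuous_iterK (hK : Continuous (uncurry K)) (n : ℕ) :
    Continuous (uncurry (iterK K n)) := by
  induction n with
  | zero => exact hK
  | succ n ih =>
    set g : ℝ × ℝ → ℝ → ℝ := fun p η => K p.1 η * iterK K n η p.2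
    have hg : Continuous (uncurry g) :=
      (hK.comp (by fun_prop : Continuous fun q : (ℝ × ℝ) × ℝ => (q.1.1, q.2))).mul
        (ih.comp (by fun_prop : Continuous fun q : (ℝ × ℝ) × ℝ => (q.2, q.1.2)))
    have hsplit : uncurry (iterK K (n + 1)) =
        fun p => (∫ η in (0 : ℝ)..p.1, g p η) - ∫ η in (0 : ℝ)..p.2, g p η := by
      funext p
      have hgp : Continuous (g p) := hg.comp (Continuous.prodMk_right p)
      exact (integral_interval_sub_left (hgp.intervalIntegrable _ _)
        (hgp.intervalIntegrable _ _)).symm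
    rw [hsplit]
    exact (continuous_parametric_intervalIntegral_of_continuous hg continuous_fst).sub
      (continuous_parametric_intervalIntegral_of_continuous hg continuous_snd)

theorem abs_iterK_le {a b M : ℝ} (hM : ∀ t s, a ≤ s → s ≤ t → t ≤ b → |K t s| ≤ M) (n : ℕ)
    {t s : ℝ} (has : a ≤ s) (hst : s ≤ t) (htb : t ≤ b) :
    |iterK K n t s| ≤ M ^ (n + 1) * (t - s) ^ n / n ! := by
  induction n generalizing t s with
  | zero => simpa [iterK] using hM t s has hst htb
  | succ n ih =>
    have hM0 : 0 ≤ M := (abs_nonneg _).trans (hM t t (has.trans hst) le_rfl htb)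
    have hpointwise : ∀ᵐ η, η ∈ Ioc s t →
        ‖K t η * iterK K n η s‖ ≤ M ^ (n + 2) / n ! * (η - s) ^ n := by
      refine ae_of_all _ fun η hη => ?_
      rw [Real.norm_eq_abs, abs_mul]
      calc |K t η| * |iterK K n η s|
          ≤ M * (M ^ (n + 1) * (η - s) ^ n / n !) :=
            mul_le_mul (hM t η (has.trans hη.1.le) hη.2 htb)
              (ih has hη.1.le (hη.2.trans htb)) (abs_nonneg _) hM0
        _ = M ^ (n + 2) / n ! * (η - s) ^ n := by ring
    have hmoment : ∫ η in s..t, M ^ (n + 2) / n ! * (η - s) ^ n =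
        M ^ (n + 2) / n ! * ((t - s) ^ (n + 1) / (n + 1)) := by
      rw [intervalIntegral.integral_const_mul, integral_comp_sub_right (· ^ n), sub_self,
        integral_pow]
      simp
    calc |iterK K (n + 1) t s| = ‖∫ η in s..t, K t η * iterK K n η s‖ := rfl
      _ ≤ ∫ η in s..t, M ^ (n + 2) / n ! * (η - s) ^ n :=
        norm_integral_le_of_norm_le hst hpointwise
          (Continuous.intervalIntegrable (by fun_prop) _ _)
      _ = M ^ (n + 1 + 1) * (t - s) ^ (n + 1) / (n + 1)! := by
        rw [hmoment, factorial_succ]; push_cast; field_simp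

theorem abs_iterK_mul_pow_le {a b M : ℝ} (hM : ∀ t s, a ≤ s → s ≤ t → t ≤ b → |K t s| ≤ M)
    (lam : ℝ) (n : ℕ) {t s : ℝ} (has : a ≤ s) (hst : s ≤ t) (htb : t ≤ b) :
    |iterK K n t s * lam ^ n| ≤ M * ((M * (b - a) * |lam|) ^ n / n !) := by
  have hM0 : 0 ≤ M := (abs_nonneg _).trans (hM t t (has.trans hst) le_rfl htb)
  calc |iterK K n t s * lam ^ n| = |iterK K n t s| * |lam| ^ n := by rw [abs_mul, abs_pow]
    _ ≤ M ^ (n + 1) * (t - s) ^ n / n ! * |lam| ^ n := by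
      gcongr; exact abs_iterK_le hM n has hst htb
    _ ≤ M ^ (n + 1) * (b - a) ^ n / n ! * |lam| ^ n := by gcongr
    _ = M * ((M * (b - a) * |lam|) ^ n / n !) := by rw [mul_pow, mul_pow]; ring

theorem summable_iterK_mul_pow {a b M : ℝ} (hM : ∀ t s, a ≤ s → s ≤ t → t ≤ b → |K t s| ≤ M)
    (lam : ℝ) {t s : ℝ} (has : a ≤ s) (hst : s ≤ t) (htb : t ≤ b) :
    Summable fun ℓ => iterK K ℓ t s * lam ^ ℓ :=
  ((Real.summable_pow_div_factorial _).mul_left M).of_norm_bounded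
    fun ℓ => abs_iterK_mul_pow_le hM lam ℓ has hst htb

theorem iterK_congr {K' : ℝ → ℝ → ℝ} {a b : ℝ}
    (h : ∀ t s, a ≤ s → s ≤ t → t ≤ b → K t s = K' t s) (n : ℕ) {t s : ℝ}
    (has : a ≤ s) (hst : s ≤ t) (htb : t ≤ b) : iterK K n t s = iterK K' n t s := by
  induction n generalizing t s with
  | zero => exact h t s has hst htb
  | succ n ih =>
    refine integral_congr fun η hη => ?_
    rw [uIcc_of_le hst] at hη
    simp only [h t η (has.trans hη.1) hη.2 htb, ih has hη.1 (hη.2.trans htb)]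

theorem resolventKer_congr {K' : ℝ → ℝ → ℝ} {a b : ℝ}
    (h : ∀ t s, a ≤ s → s ≤ t → t ≤ b → K t s = K' t s) (lam : ℝ) {t s : ℝ}
    (has : a ≤ s) (hst : s ≤ t) (htb : t ≤ b) :
    resolventKer K lam t s = resolventKer K' lam t s :=
  tsum_congr fun ℓ => by rw [iterK_congr h ℓ has hst htb]

theorem exists_bound_on_triangle (hK : Continuous (uncurry K)) (a b : ℝ) :
    ∃ M, ∀ t s, a ≤ s → s ≤ t → t ≤ b → |K t s| ≤ M := by
  obtain ⟨M, hM⟩ := (isCompact_Icc.prod isCompact_Icc).exists_bound_of_continuousOn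
    (s := Icc a b ×ˢ Icc a b) hK.continuousOn
  exact ⟨M, fun t s has hst htb => hM (t, s) ⟨⟨has.trans hst, htb⟩, has, hst.trans htb⟩⟩

theorem iterK_succ_eq_integral_iterK_mul (hK : Continuous (uncurry K)) (n : ℕ) {s t : ℝ}
    (hst : s ≤ t) :
    iterK K (n + 1) t s = ∫ η in s..t, iterK K n t η * K η s := by
  induction n generalizing s t with
  | zero => rfl
  | succ n ih =>
    have hcont : Continuous (uncurry fun η ξ => K t η * iterK K n η ξ * K ξ s) := by
      have := continuous_iterK hK n
      fun_prop
    calc iterK K (n + 2) t s = ∫ η in s..t, K t η * iterK K (n + 1) η s := rfl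
      _ = ∫ η in s..t, ∫ ξ in s..η, K t η * iterK K n η ξ * K ξ s := by
        refine integral_congr fun η hη => ?_
        rw [uIcc_of_le hst] at hη
        rw [ih hη.1, ← intervalIntegral.integral_const_mul]
        simp only [mul_assoc]
      _ = ∫ ξ in s..t, ∫ η in ξ..t, K t η * iterK K n η ξ * K ξ s :=
        integral_integral_triangle_swap hcont hst
      _ = ∫ ξ in s..t, iterK K (n + 1) t ξ * K ξ s := by
        simp only [intervalIntegral.integral_mul_const]; rfl

theorem hasSum_iterK_mul_pow (hK : Continuous (uncurry K)) (lam : ℝ) {s t : ℝ} (hst : s ≤ t) :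
    HasSum (fun ℓ => iterK K ℓ t s * lam ^ ℓ) (resolventKer K lam t s) := by
  obtain ⟨M, hM⟩ := exists_bound_on_triangle hK s t
  exact (summable_iterK_mul_pow hM lam le_rfl hst le_rfl).hasSum

theorem hasSum_iterK_succ_mul_pow (hK : Continuous (uncurry K)) (lam : ℝ) {s t : ℝ}
    (hst : s ≤ t) :
    HasSum (fun ℓ => iterK K (ℓ + 1) t s * lam ^ ℓ)
      (∫ η in s..t, resolventKer K lam t η * K η s) := by
  obtain ⟨M, hM⟩ := exists_bound_on_triangle hK s t
  have hM0 : 0 ≤ M := (abs_nonneg _).trans (hM t t hst le_rfl le_rfl)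
  have hterm : (fun ℓ => iterK K (ℓ + 1) t s * lam ^ ℓ) =
      fun ℓ => ∫ η in s..t, iterK K ℓ t η * lam ^ ℓ * K η s := by
    funext ℓ
    rw [iterK_succ_eq_integral_iterK_mul hK ℓ hst, ← intervalIntegral.integral_mul_const]
    exact integral_congr fun η _ => by ring
  rw [hterm]
  have hcont : ∀ ℓ, Continuous fun η => iterK K ℓ t η * lam ^ ℓ * K η s := by
    intro ℓ
    have := continuous_iterK hK ℓ
    fun_prop
  refine hasSum_integral_of_dominated_convergence
    (fun ℓ _ => M * ((M * (t - s) * |lam|) ^ ℓ / ℓ !) * M)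
    (fun ℓ => (hcont ℓ).aestronglyMeasurable) (fun ℓ => ae_of_all _ fun η hη => ?_)
    (ae_of_all _ fun _ _ => ((Real.summable_pow_div_factorial _).mul_left M).mul_right M)
    intervalIntegrable_const (ae_of_all _ fun η hη => ?_)
  · rw [uIoc_of_le hst] at hη
    rw [Real.norm_eq_abs, abs_mul]
    exact mul_le_mul (abs_iterK_mul_pow_le hM lam ℓ hη.1.le hη.2 le_rfl)
      (hM η s le_rfl hη.1.le hη.2) (abs_nonneg _) (by positivity)
  · rw [uIoc_of_le hst] at hη
    exact (hasSum_iterK_mul_pow hK lam hη.2).mul_right (K η s)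

theorem resolventKer_eq_add_mul_integral (hK : Continuous (uncurry K)) (lam : ℝ) {s t : ℝ}
    (hst : s ≤ t) :
    resolventKer K lam t s = K t s + lam * ∫ η in s..t, resolventKer K lam t η * K η s := by
  have htail : HasSum (fun ℓ => iterK K (ℓ + 1) t s * lam ^ (ℓ + 1))
      (lam * ∫ η in s..t, resolventKer K lam t η * K η s) := by
    refine ((hasSum_iterK_succ_mul_pow hK lam hst).mul_left lam).congr_fun fun ℓ => ?_
    ring
  simpa [iterK] using (hasSum_iterK_mul_pow hK lam hst).unique htail.zero_add

end IterK

theorem kernel_resolvent_reciprocity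
    (a b : ℝ) (K : ℝ → ℝ → ℝ)
    (hK : ContinuousOn (fun p : ℝ × ℝ => K p.1 p.2)
      {p : ℝ × ℝ | a ≤ p.2 ∧ p.2 ≤ p.1 ∧ p.1 ≤ b})
    (lam : ℝ) :
    ∀ t s : ℝ, a ≤ s → s ≤ t → t ≤ b →
      K t s = -lam * (∫ η in s..t, resolventKer K lam t η * K η s) +
        resolventKer K lam t s := by
  intro t s has hst htb
  have hΩ : IsClosed {p : ℝ × ℝ | a ≤ p.2 ∧ p.2 ≤ p.1 ∧ p.1 ≤ b} :=
    (isClosed_le continuous_const continuous_snd).inter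
      ((isClosed_le continuous_snd continuous_fst).inter
        (isClosed_le continuous_fst continuous_const))
  obtain ⟨g, hg, hKg⟩ := hK.exists_continuous_eqOn hΩ
  set K' := curry g
  have hKK' : ∀ t s, a ≤ s → s ≤ t → t ≤ b → K t s = K' t s :=
    fun t s has hst htb => hKg (x := (t, s)) ⟨has, hst, htb⟩
  have hint : ∫ η in s..t, resolventKer K lam t η * K η s =
      ∫ η in s..t, resolventKer K' lam t η * K' η s := by
    refine integral_congr fun η hη => ?_
    rw [uIcc_of_le hst] at hη
    simp only [resolventKer_congr hKK' lam (has.trans hη.1) hη.2 htb,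
      hKK' η s has hη.1 (hη.2.trans htb)]
  rw [hint, resolventKer_congr hKK' lam has hst htb, hKK' t s has hst htb,
    resolventKer_eq_add_mul_integral (K := K') hg lam hst]
  ring
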